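/- Let P ≥ 2, ω₁,…,ω_P pairwise distinct nonzero reals, κ₁,…,κ_{P-1} pairwise distinct reals with κ_k ω_i ≠ 1 and 1-κ_j ω_P ≠ 0 for all relevant indices. Define β_i = ∏_{k=1}^{P-1} ∏_{l≠i} (1-κ_k ω_i) ω_l/(ω_l-ω_i) for i = 1,…,P-1. Then these β_i satisfy the linear system Σ_{j=1}^{P-1} (1-ω_j/ω_P) β_j/(1-κ_i ω_j) = 1 for every i = 1,…,P-1. -/

import Mathlib

/-!
Put `f = ∏_{k ≠ i} (1 - κ_k X)`, a polynomial of degree `< P - 1` with `f(0) = 1`. Lagrange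
interpolation of `f` at the nodes `ω_1, …, ω_{P-1}`, evaluated at `0`, gives
`1 = ∑_j f(ω_j) ∏_{l ≠ j, l < P} ω_l / (ω_l - ω_j)`. The `j`-th summand of the system is the same
number: `β_j` carries the extra factor `1 - κ_i ω_j` of `∏_k`, cancelled by the denominator, and
the extra factor `ω_P / (ω_P - ω_j)` of `∏_{l ≠ j}`, cancelled by `1 - ω_j / ω_P`.
-/

open Finset Polynomial

theorem Fin.prod_univ_erase_castSucc {M : Type*} [CommMonoid M] {n : ℕ} (g : Fin (n + 1) → M)
    (j : Fin n) :
    ∏ l ∈ univ.erase j.castSucc, g l = g (Fin.last n) * ∏ l ∈ univ.erase j, g l.castSucc := by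
  simp only [← filter_ne', prod_filter, Fin.prod_univ_castSucc, Fin.castSucc_inj, ne_eq,
    (Fin.castSucc_lt_last j).ne', not_false_eq_true, if_true]
  exact mul_comm _ _

theorem Polynomial.natDegree_prod_one_sub_C_mul_X_le {R ι : Type*} [CommRing R] (t : Finset ι)
    (a : ι → R) : (∏ k ∈ t, (1 - C (a k) * X)).natDegree ≤ #t :=
  (natDegree_prod_le _ _).trans <|
    (sum_le_card_nsmul t _ 1 fun _ _ => by compute_degree!).trans_eq
      ((smul_eq_mul _ _).trans (mul_one _))

theorem one_sub_div_mul_div_sub_cancel {K : Type*} [Field K] {A B b c d : K} (hc : c ≠ 0)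
    (hcb : c - b ≠ 0) (hd : d ≠ 0) : (1 - b / c) * (d * A * (c / (c - b) * B)) / d = A * B := by
  field_simp

namespace Lagrange

variable {F ι : Type*} [Field F] [DecidableEq ι] {s : Finset ι} {v : ι → F}

theorem eval_basis (x : F) (i : ι) :
    (Lagrange.basis s v i).eval x = ∏ j ∈ s.erase i, (v j - x) / (v j - v i) := by
  refine (eval_prod _ _ _).trans (prod_congr rfl fun j _ => ?_)
  simp only [basisDivisor, eval_mul, eval_C, eval_sub, eval_X]
  rw [← neg_sub (v j), ← neg_sub (v j), inv_neg, neg_mul_neg, inv_mul_eq_div]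

theorem eval_eq_sum_mul_prod (hvs : Set.InjOn v s) {f : F[X]} (hf : f.degree < #s) (x : F) :
    f.eval x = ∑ i ∈ s, f.eval (v i) * ∏ j ∈ s.erase i, (v j - x) / (v j - v i) := by
  conv_lhs => rw [eq_interpolate hvs hf]
  simp only [interpolate_apply, eval_finsetSum, eval_mul, eval_C, eval_basis]

end Lagrange

theorem srj_beta_formula_general (n : ℕ)
    (ω : Fin (n + 1) → ℝ) (κ : Fin n → ℝ)
    (hω : Function.Injective ω) (hω0 : ∀ i, ω i ≠ 0)
    (h1 : ∀ (i : Fin n) (j : Fin (n + 1)), κ i * ω j ≠ 1)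
    (β : Fin n → ℝ)
    (hβ : β = fun i =>
      (∏ k, (1 - κ k * ω i.castSucc)) *
        ∏ l ∈ univ.erase i.castSucc, ω l / (ω l - ω i.castSucc)) :
    ∀ i : Fin n,
      ∑ j, (1 - ω j.castSucc / ω (Fin.last n)) * β j / (1 - κ i * ω j.castSucc) = 1 := by
  intro i
  subst hβ
  have hnodes : Set.InjOn (fun j : Fin n => ω j.castSucc) (univ : Finset (Fin n)) :=
    (hω.comp (Fin.castSucc_injective n)).injOn
  have hdeg : (∏ k ∈ univ.erase i, (1 - C (κ k) * X)).degree <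
      (#(univ : Finset (Fin n)) : WithBot ℕ) :=
    degree_le_natDegree.trans_lt <| by
      exact_mod_cast (natDegree_prod_one_sub_C_mul_X_le _ κ).trans_lt
        (card_erase_lt_of_mem (mem_univ i))
  have hinterp := Lagrange.eval_eq_sum_mul_prod hnodes hdeg 0
  simp only [eval_prod, eval_sub, eval_one, eval_mul, eval_C, eval_X, mul_zero, sub_zero,
    prod_const_one] at hinterp
  refine (sum_congr rfl fun j _ => ?_).trans hinterp.symm
  dsimp only
  rw [← mul_prod_erase univ (fun k => 1 - κ k * ω j.castSucc) (mem_univ i),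
    Fin.prod_univ_erase_castSucc]
  exact one_sub_div_mul_div_sub_cancel (hω0 _)
    (sub_ne_zero.mpr (hω.ne (Fin.castSucc_lt_last j).ne')) (sub_ne_zero.mpr (h1 i _).symm)

/-- Theorem 2 of the paper: closed-form `β` solves the normalization system,
with `P = n + 1` levels. -/
theorem srj_beta_formula (n : ℕ) (hn : 1 ≤ n)
    (ω : Fin (n + 1) → ℝ) (κ : Fin n → ℝ)
    (hω : Function.Injective ω) (hω0 : ∀ i, ω i ≠ 0)
    (hκ : Function.Injective κ)
    (h1 : ∀ (i : Fin n) (j : Fin (n + 1)), κ i * ω j ≠ 1)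
    (β : Fin n → ℝ)
    (hβ : β = fun i =>
      (∏ k, (1 - κ k * ω i.castSucc)) *
        ∏ l ∈ univ.erase i.castSucc, ω l / (ω l - ω i.castSucc)) :
    ∀ i : Fin n,
      ∑ j, (1 - ω j.castSucc / ω (Fin.last n)) * β j / (1 - κ i * ω j.castSucc) = 1 :=
  srj_beta_formula_general n ω κ hω hω0 h1 β hβ
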